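/- Let f and g be real-valued measurable functions on probability spaces with f ≺ g (g majorizes f: ∫_0^s f^* ≤ ∫_0^s g^* for all s ∈ [0,1) with equality at s=1). Then for every convex function φ : ℝ → ℝ, ∫ φ(f) ≤ ∫ φ(g), provided both integrals exist. -/

import Mathlib

open MeasureTheory

/-- The (signed) decreasing rearrangement of a real-valued function on a
probability space: f^*(t) = inf { a | μ{f > a} ≤ t }. -/
noncomputable def decRearr {Z : Type*} [MeasurableSpace Z] (μ : Measure Z)
    (f : Z → ℝ) (t : ℝ) : ℝ :=
  sInf {a : ℝ | (μ {x | a < f x}).toReal ≤ t}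

open Set


noncomputable def decRearr' {Z : Type*} [MeasurableSpace Z] (μ : Measure Z)
    (f : Z → ℝ) (t : ℝ) : ℝ :=
  sInf {a : ℝ | (μ {x | a < f x}).toReal ≤ t}

noncomputable def distFn {Z : Type*} [MeasurableSpace Z] (μ : Measure Z)
    (f : Z → ℝ) (a : ℝ) : ℝ :=
  (μ {x | a < f x}).toReal

section DecRearr

variable {Z : Type*} [MeasurableSpace Z] (μ : Measure Z) [IsProbabilityMeasure μ] (f : Z → ℝ)

lemma distFn_antitone : Antitone (distFn μ f) := by
  intro a b hab
  apply ENNReal.toReal_mono (measure_ne_top μ _)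
  exact measure_mono (fun x hx => lt_of_le_of_lt hab hx)

lemma distFn_nonneg (a : ℝ) : 0 ≤ distFn μ f a := ENNReal.toReal_nonneg

lemma distFn_le_one (a : ℝ) : distFn μ f a ≤ 1 := by
  have : μ {x | a < f x} ≤ 1 := (measure_mono (subset_univ _)).trans_eq measure_univ
  simpa [distFn] using ENNReal.toReal_mono ENNReal.one_ne_top this

lemma distFn_right_cont {a t : ℝ} (h : ∀ b, a < b → distFn μ f b ≤ t) :
    distFn μ f a ≤ t := by
  have ht0 : 0 ≤ t := le_trans (distFn_nonneg μ f (a+1)) (h (a+1) (by linarith))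
  have hU : {x | a < f x} = ⋃ n : ℕ, {x | a + 1/(n+1) < f x} := by
    ext x
    simp only [mem_setOf_eq, mem_iUnion]
    constructor
    · intro hx
      obtain ⟨n, hn⟩ := exists_nat_one_div_lt (show (0:ℝ) < f x - a by linarith)
      exact ⟨n, by push_cast at hn ⊢; linarith⟩
    · rintro ⟨n, hn⟩
      have : (0:ℝ) < 1/(n+1) := by positivity
      linarith
  have hmono : Monotone (fun n : ℕ => {x | a + 1/(n+1) < f x}) := by
    intro m n hmn x hx
    simp only [mem_setOf_eq] at hx ⊢
    have : (1:ℝ)/(n+1) ≤ 1/(m+1) := by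
      apply div_le_div_of_nonneg_left one_pos.le (by positivity)
      exact_mod_cast by omega
    linarith
  have hsup : μ {x | a < f x} = ⨆ n : ℕ, μ {x | a + 1/(n+1) < f x} := by
    rw [hU]; exact hmono.measure_iUnion
  have hle : μ {x | a < f x} ≤ ENNReal.ofReal t := by
    rw [hsup]
    apply iSup_le
    intro n
    have hpos : (0:ℝ) < 1/(n+1) := by positivity
    have := h (a + 1/(n+1)) (by linarith)
    exact ENNReal.le_ofReal_iff_toReal_le (measure_ne_top μ _) ht0 |>.mpr this
  exact ENNReal.toReal_le_of_le_ofReal ht0 hle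

lemma exists_distFn_le (hf : Measurable f) {t : ℝ} (ht : 0 < t) :
    ∃ a : ℝ, distFn μ f a ≤ t := by
  have hI : ⋂ n : ℕ, {x | (n:ℝ) < f x} = ∅ := by
    ext x
    simp only [mem_iInter, mem_setOf_eq, mem_empty_iff_false, iff_false, not_forall, not_lt]
    obtain ⟨n, hn⟩ := exists_nat_gt (f x)
    exact ⟨n, hn.le⟩
  have hanti : Antitone (fun n : ℕ => {x | (n:ℝ) < f x}) := by
    intro m n hmn x hx
    simp only [mem_setOf_eq] at hx ⊢
    exact lt_of_le_of_lt (by exact_mod_cast hmn) hx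
  have hinf : (⨅ n : ℕ, μ {x | (n:ℝ) < f x}) = 0 := by
    rw [← hanti.measure_iInter (fun n => (hf measurableSet_Ioi).nullMeasurableSet)
      ⟨0, measure_ne_top μ _⟩, hI, measure_empty]
  have : (⨅ n : ℕ, μ {x | (n:ℝ) < f x}) < ENNReal.ofReal t := by
    rw [hinf]; exact ENNReal.ofReal_pos.mpr ht
  obtain ⟨n, hn⟩ := iInf_lt_iff.mp this
  refine ⟨n, le_of_lt ?_⟩
  show (μ {x | (n:ℝ) < f x}).toReal < t
  exact (ENNReal.lt_ofReal_iff_toReal_lt (measure_ne_top μ _)).mp hn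

lemma exists_lt_distFn {t : ℝ} (ht : t < 1) : ∃ b : ℝ, t < distFn μ f b := by
  have hU : ⋃ n : ℕ, {x | -(n:ℝ) < f x} = univ := by
    ext x
    simp only [mem_iUnion, mem_setOf_eq, mem_univ, iff_true]
    obtain ⟨n, hn⟩ := exists_nat_gt (-(f x))
    exact ⟨n, by linarith⟩
  have hmono : Monotone (fun n : ℕ => {x | -(n:ℝ) < f x}) := by
    intro m n hmn x hx
    simp only [mem_setOf_eq] at hx ⊢
    have : (m:ℝ) ≤ n := by exact_mod_cast hmn
    linarith
  have hsup : (⨆ n : ℕ, μ {x | -(n:ℝ) < f x}) = 1 := by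
    rw [← hmono.measure_iUnion, hU, measure_univ]
  have hlt : ENNReal.ofReal t < ⨆ n : ℕ, μ {x | -(n:ℝ) < f x} := by
    rw [hsup]; exact ENNReal.ofReal_lt_one.mpr ht
  obtain ⟨n, hn⟩ := lt_iSup_iff.mp hlt
  refine ⟨-(n:ℝ), ?_⟩
  show t < (μ {x | -(n:ℝ) < f x}).toReal
  rcases le_or_gt t 0 with ht0 | ht0
  · refine lt_of_le_of_lt ht0 ?_
    refine ENNReal.toReal_pos ?_ (measure_ne_top μ _)
    intro h; rw [h] at hn; simpa using hn
  · rw [← ENNReal.ofReal_lt_iff_lt_toReal ht0.le (measure_ne_top μ _)]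
    exact hn

variable {μ f}

lemma decRearr'_le_iff (hf : Measurable f) {t a : ℝ} (ht : t ∈ Ioo (0:ℝ) 1) :
    decRearr' μ f t ≤ a ↔ distFn μ f a ≤ t := by
  have hne : {b : ℝ | (μ {x | b < f x}).toReal ≤ t}.Nonempty := exists_distFn_le μ f hf ht.1
  have hbdd : BddBelow {b : ℝ | (μ {x | b < f x}).toReal ≤ t} := by
    obtain ⟨b₀, hb₀⟩ := exists_lt_distFn μ f ht.2
    refine ⟨b₀, fun b hb => ?_⟩
    by_contra hcon
    push_neg at hcon
    exact absurd (le_trans (distFn_antitone μ f hcon.le) hb) (not_le.mpr hb₀)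
  constructor
  · intro h
    apply distFn_right_cont μ f
    intro b hab
    obtain ⟨c, hc, hcb⟩ := exists_lt_of_csInf_lt hne (lt_of_le_of_lt h hab)
    exact le_trans (distFn_antitone μ f hcb.le) hc
  · intro h
    exact csInf_le hbdd h

lemma lt_decRearr'_iff (hf : Measurable f) {t a : ℝ} (ht : t ∈ Ioo (0:ℝ) 1) :
    a < decRearr' μ f t ↔ t < distFn μ f a := by
  rw [← not_le, ← not_le, decRearr'_le_iff hf ht]

lemma decRearr'_antitoneOn (hf : Measurable f) : AntitoneOn (decRearr' μ f) (Ioo (0:ℝ) 1) := by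
  intro s hs t ht hst
  rw [decRearr'_le_iff hf ht]
  exact le_trans ((decRearr'_le_iff hf hs).mp le_rfl) hst

end DecRearr
section Subgrad

noncomputable def subgrad (φ : ℝ → ℝ) (x : ℝ) : ℝ :=
  sSup ((fun w => slope φ w x) '' Iio x)

variable {φ : ℝ → ℝ} (hφ : ConvexOn ℝ Set.univ φ)
include hφ

lemma slope_le_slope' {w x z : ℝ} (hwx : w < x) (hxz : x < z) :
    slope φ w x ≤ slope φ x z := by
  have := hφ.slope_mono_adjacent (mem_univ w) (mem_univ z) hwx hxz
  simpa [slope_def_field] using this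

lemma subgrad_le_slope {x z : ℝ} (hxz : x < z) : subgrad φ x ≤ slope φ x z := by
  apply csSup_le (Set.Nonempty.image _ ⟨x-1, by simp⟩)
  rintro b ⟨w, hw, rfl⟩
  exact slope_le_slope' hφ hw hxz

lemma slope_le_subgrad {w x : ℝ} (hwx : w < x) : slope φ w x ≤ subgrad φ x := by
  apply le_csSup
  · refine ⟨slope φ x (x+1), ?_⟩
    rintro b ⟨w', hw', rfl⟩
    rw [slope_comm]
    rw [mem_Iio] at hw'
    rw [slope_comm]
    exact slope_le_slope' hφ hw' (by linarith)
  · exact ⟨w, hwx, rfl⟩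

lemma subgrad_inequality (x y : ℝ) : φ x + subgrad φ x * (y - x) ≤ φ y := by
  rcases lt_trichotomy y x with h | h | h
  · have := slope_le_subgrad hφ h
    rw [slope_def_field] at this
    have hx : 0 < x - y := by linarith
    rw [div_le_iff₀ hx] at this
    nlinarith
  · simp [h]
  · have := subgrad_le_slope hφ h
    rw [slope_def_field] at this
    have hx : 0 < y - x := by linarith
    rw [le_div_iff₀ hx] at this
    nlinarith

lemma subgrad_monotone : Monotone (subgrad φ) := by
  intro x y hxy
  rcases eq_or_lt_of_le hxy with rfl | h
  · exact le_rfl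
  · calc subgrad φ x ≤ slope φ x y := subgrad_le_slope hφ h
    _ ≤ subgrad φ y := slope_le_subgrad hφ h
end Subgrad
noncomputable def decT {Z : Type*} [MeasurableSpace Z] (μ : Measure Z)
    (f : Z → ℝ) (t : ℝ) : ℝ :=
  if t ∈ Ioo (0:ℝ) 1 then decRearr' μ f t else 0

section DecT

variable {Z : Type*} [MeasurableSpace Z] {μ : Measure Z} [IsProbabilityMeasure μ] {f : Z → ℝ}
  (hf : Measurable f)

lemma decT_eqOn : EqOn (decT μ f) (decRearr' μ f) (Ioo (0:ℝ) 1) := by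
  intro t ht; simp [decT, ht]

include hf

lemma decT_antitoneOn : AntitoneOn (decT μ f) (Ioo (0:ℝ) 1) := by
  intro s hs t ht hst
  rw [decT_eqOn hs, decT_eqOn ht]
  exact decRearr'_antitoneOn hf hs ht hst

lemma preimage_decT_Iic (a : ℝ) :
    decT μ f ⁻¹' Iic a =
      (Ioo (0:ℝ) 1 ∩ Ici (distFn μ f a)) ∪ ((Ioo (0:ℝ) 1)ᶜ ∩ {t : ℝ | (0:ℝ) ≤ a}) := by
  ext t
  by_cases ht : t ∈ Ioo (0:ℝ) 1
  · rw [mem_preimage, mem_Iic, decT, if_pos ht]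
    simp only [mem_union, mem_inter_iff, ht, true_and, mem_compl_iff, not_true_eq_false,
      false_and, or_false, mem_Ici]
    exact decRearr'_le_iff hf ht
  · rw [mem_preimage, mem_Iic, decT, if_neg ht]
    simp [ht]

lemma measurable_decT : Measurable (decT μ f) := by
  apply measurable_of_Iic
  intro a
  rw [preimage_decT_Iic hf]
  exact ((measurableSet_Ioo.inter measurableSet_Ici).union
    (measurableSet_Ioo.compl.inter (MeasurableSet.const _)))

lemma preimage_decT_Ioi_inter {a : ℝ} :
    decT μ f ⁻¹' Ioi a ∩ Ioo 0 1 = Ioo (0:ℝ) (distFn μ f a) := by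
  ext t
  simp only [mem_inter_iff, mem_preimage, mem_Ioi, mem_Ioo]
  constructor
  · rintro ⟨h1, h2⟩
    rw [decT_eqOn h2] at h1
    exact ⟨h2.1, (lt_decRearr'_iff hf h2).mp h1⟩
  · rintro ⟨h1, h2⟩
    have ht1 : t < 1 := lt_of_lt_of_le h2 (distFn_le_one μ f a)
    have hmem : t ∈ Ioo (0:ℝ) 1 := ⟨h1, ht1⟩
    refine ⟨?_, hmem⟩
    rw [decT_eqOn hmem]
    exact (lt_decRearr'_iff hf hmem).mpr h2

omit hf in
lemma isProbabilityMeasure_restrict_Ioo :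
    IsProbabilityMeasure (volume.restrict (Ioo (0:ℝ) 1)) := by
  constructor
  rw [Measure.restrict_apply_univ, Real.volume_Ioo]
  norm_num

lemma map_decT_eq : Measure.map (decT μ f) (volume.restrict (Ioo (0:ℝ) 1)) =
    Measure.map f μ := by
  have hprob : IsProbabilityMeasure (volume.restrict (Ioo (0:ℝ) 1)) :=
    isProbabilityMeasure_restrict_Ioo
  have h1 : IsProbabilityMeasure (Measure.map (decT μ f) (volume.restrict (Ioo (0:ℝ) 1))) :=
    Measure.isProbabilityMeasure_map (measurable_decT hf).aemeasurable
  have h2 : IsProbabilityMeasure (Measure.map f μ) :=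
    Measure.isProbabilityMeasure_map hf.aemeasurable
  refine ext_of_generate_finite (Set.range Ioi) ?_ ?_ ?_ (by simp [h1.measure_univ, h2.measure_univ])
  · rw [BorelSpace.measurable_eq (α := ℝ)]
    exact borel_eq_generateFrom_Ioi ℝ
  · rintro _ ⟨a, rfl⟩ _ ⟨b, rfl⟩ _
    rw [Ioi_inter_Ioi]
    exact ⟨max a b, rfl⟩
  · rintro _ ⟨a, rfl⟩
    rw [Measure.map_apply (measurable_decT hf) measurableSet_Ioi,
      Measure.map_apply hf measurableSet_Ioi,
      Measure.restrict_apply (measurable_decT hf measurableSet_Ioi),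
      preimage_decT_Ioi_inter hf, Real.volume_Ioo, sub_zero, distFn,
      ENNReal.ofReal_toReal (measure_ne_top μ _)]
    rfl

end DecT
section Core

/-- Core positivity lemma, bounded case. -/
lemma pos_core (c w : ℝ → ℝ) (hcm : Measurable c) (hwm : Measurable w)
    (hanti : AntitoneOn c (Ioo (0:ℝ) 1))
    (hw : IntegrableOn w (Ioo (0:ℝ) 1) volume)
    (B M : ℝ) (hB : ∀ t ∈ Ioo (0:ℝ) 1, B ≤ c t) (hM : ∀ t ∈ Ioo (0:ℝ) 1, c t ≤ M)
    (hF : ∀ s, 0 ≤ s → s ≤ 1 → 0 ≤ ∫ t in Ioo (0:ℝ) s, w t)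
    (hF1 : (∫ t in Ioo (0:ℝ) 1, w t) = 0) :
    0 ≤ ∫ t in Ioo (0:ℝ) 1, c t * w t := by
  have hBM : B ≤ M := le_trans (hB (1/2) (by norm_num)) (hM (1/2) (by norm_num))
  set K : ℝ := M - B + 1 with hK
  have hKpos : 0 < K := by linarith
  set p : ℝ → ℝ := fun t => c t - B with hp
  have hpm : Measurable p := hcm.sub measurable_const
  have hp0 : ∀ t ∈ Ioo (0:ℝ) 1, 0 ≤ p t := fun t ht => by
    simp only [hp]; linarith [hB t ht]
  have hpK : ∀ t ∈ Ioo (0:ℝ) 1, p t < K := fun t ht => by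
    simp only [hp, hK]; linarith [hM t ht]
  have hpanti : AntitoneOn p (Ioo (0:ℝ) 1) := fun s hs t ht hst => by
    simp only [hp]
    have := hanti hs ht hst
    linarith
  set lam := volume.restrict (Ioo (0:ℝ) 1) with hlam
  set gam := volume.restrict (Ioo (0:ℝ) K) with hgam
  have hgamK : gam Set.univ = ENNReal.ofReal K := by
    rw [hgam, Measure.restrict_apply_univ, Real.volume_Ioo, sub_zero]
  set ψ : ℝ → ℝ → ℝ := fun t a => if a < p t then w t else 0 with hψ
  have hψm : Measurable (Function.uncurry ψ) := by
    apply Measurable.ite _ (hwm.comp measurable_fst) measurable_const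
    exact measurableSet_lt measurable_snd (hpm.comp measurable_fst)
  have hψeq : ∀ t, (fun a => ψ t a) = (Iio (p t)).indicator (fun _ => w t) := by
    intro t; funext a
    simp [hψ, Set.indicator_apply]
  have hψeq2 : ∀ a, (fun t => ψ t a) = (p ⁻¹' Ioi a).indicator w := by
    intro a; funext t
    show (if a < p t then w t else 0) = (p ⁻¹' Ioi a).indicator w t
    by_cases h : a < p t
    · rw [if_pos h, Set.indicator_of_mem (by simpa using h)]
    · rw [if_neg h, Set.indicator_of_notMem (by simpa using h)]
  have hψbound : ∀ t a, ‖ψ t a‖ ≤ ‖w t‖ := by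
    intro t a
    simp only [hψ]
    split_ifs
    · exact le_rfl
    · simp
  -- integrability of ψ on the product
  have hψint : Integrable (Function.uncurry ψ) (lam.prod gam) := by
    rw [integrable_prod_iff hψm.aestronglyMeasurable]
    constructor
    · apply Filter.Eventually.of_forall
      intro t
      show Integrable (fun a => ψ t a) gam
      rw [hψeq t]
      exact (integrable_const (w t)).indicator measurableSet_Iio
    · apply Integrable.mono' ((hw.norm.const_mul K))
      · exact (hψm.norm.stronglyMeasurable.integral_prod_right').aestronglyMeasurable
      · apply Filter.Eventually.of_forall
        intro t
        have h1 : ‖∫ a, ‖ψ t a‖ ∂gam‖ ≤ ‖w t‖ * (gam Set.univ).toReal := by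
          apply norm_integral_le_of_norm_le_const
          apply Filter.Eventually.of_forall
          intro a
          rw [norm_norm]
          exact hψbound t a
        calc ‖∫ a, ‖ψ t a‖ ∂gam‖ ≤ ‖w t‖ * (gam Set.univ).toReal := h1
          _ = K * ‖w t‖ := by
              rw [hgamK, ENNReal.toReal_ofReal hKpos.le]; ring
  -- Fubini
  have hswap : (∫ t, (∫ a, ψ t a ∂gam) ∂lam) = ∫ a, (∫ t, ψ t a ∂lam) ∂gam :=
    integral_integral_swap hψint
  -- LHS is ∫ p * w
  have hLHS : (∫ t, (∫ a, ψ t a ∂gam) ∂lam) = ∫ t, p t * w t ∂lam := by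
    apply integral_congr_ae
    filter_upwards [ae_restrict_mem measurableSet_Ioo] with t ht
    have hIio : Iio (p t) ∩ Ioo (0:ℝ) K = Ioo 0 (p t) := by
      ext a
      simp only [mem_inter_iff, mem_Iio, mem_Ioo]
      constructor
      · rintro ⟨h1, h2, _⟩; exact ⟨h2, h1⟩
      · rintro ⟨h1, h2⟩; exact ⟨h2, h1, lt_trans h2 (hpK t ht)⟩
    rw [hψeq t, integral_indicator measurableSet_Iio, setIntegral_const, measureReal_def,
      hgam, Measure.restrict_apply measurableSet_Iio, hIio, Real.volume_Ioo, sub_zero,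
      ENNReal.toReal_ofReal (hp0 t ht), smul_eq_mul]
  -- RHS is nonneg
  have hRHS : 0 ≤ ∫ a, (∫ t, ψ t a ∂lam) ∂gam := by
    rw [hgam]
    apply setIntegral_nonneg measurableSet_Ioo
    intro a ha
    set E : Set ℝ := p ⁻¹' Ioi a with hE
    have hEm : MeasurableSet E := hpm measurableSet_Ioi
    rw [hψeq2 a, integral_indicator hEm, hlam, Measure.restrict_restrict hEm]
    set E' : Set ℝ := E ∩ Ioo 0 1 with hE'
    set s : ℝ := sSup (insert 0 E') with hs
    have hbdd : BddAbove (insert 0 E') := by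
      refine ⟨1, ?_⟩
      rintro x (rfl | ⟨_, hx⟩)
      · norm_num
      · exact hx.2.le
    have hne : (insert (0:ℝ) E').Nonempty := ⟨0, mem_insert _ _⟩
    have hs0 : 0 ≤ s := le_csSup hbdd (mem_insert _ _)
    have hs1 : s ≤ 1 := by
      apply csSup_le hne
      rintro x (rfl | ⟨_, hx⟩)
      · norm_num
      · exact hx.2.le
    have hsub1 : Ioo (0:ℝ) s ⊆ E' := by
      intro t ht
      obtain ⟨y, hy, hty⟩ := exists_lt_of_lt_csSup hne ht.2
      rcases hy with rfl | ⟨hyE, hyI⟩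
      · exact absurd hty (not_lt.mpr ht.1.le)
      · have htI : t ∈ Ioo (0:ℝ) 1 := ⟨ht.1, lt_trans hty hyI.2⟩
        refine ⟨?_, htI⟩
        have hpy : a < p y := hyE
        have := hpanti htI hyI hty.le
        exact lt_of_lt_of_le hpy this
    have hsub2 : E' ⊆ Ioo 0 s ∪ {s} := by
      intro t ht
      have hts : t ≤ s := le_csSup hbdd (mem_insert_of_mem _ ht)
      rcases lt_or_eq_of_le hts with h | h
      · exact Or.inl ⟨ht.2.1, h⟩
      · exact Or.inr (by simp [h])
    have haeeq : E' =ᵐ[volume] Ioo (0:ℝ) s := by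
      apply MeasureTheory.ae_eq_set.mpr
      constructor
      · apply measure_mono_null _ (measure_singleton s)
        intro x hx
        rcases hsub2 hx.1 with h | h
        · exact absurd h hx.2
        · exact h
      · rw [Set.diff_eq_empty.mpr hsub1]
        exact measure_empty
    rw [setIntegral_congr_set haeeq]
    exact hF s hs0 hs1
  -- combine
  have hpw : Integrable (fun t => p t * w t) lam := by
    apply Integrable.bdd_mul (c := K) hw hpm.aestronglyMeasurable
    filter_upwards [ae_restrict_mem measurableSet_Ioo] with t ht
    rw [Real.norm_eq_abs, abs_le]
    constructor
    · linarith [hp0 t ht]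
    · exact (hpK t ht).le
  have hBw : Integrable (fun t => B * w t) lam := hw.const_mul B
  have hcw : (fun t => c t * w t) = fun t => p t * w t + B * w t := by
    funext t; simp only [hp]; ring
  rw [hcw]
  rw [integral_add hpw hBw, integral_const_mul]
  have h0 : 0 ≤ ∫ t, p t * w t ∂lam := by
    rw [← hLHS, hswap]; exact hRHS
  have h1 : (∫ t, w t ∂lam) = 0 := hF1
  rw [h1]
  simpa using h0

end Core
section Clamp

noncomputable def clampN (n : ℕ) (x : ℝ) : ℝ := max (-(n:ℝ)) (min x n)

lemma clampN_zero (x : ℝ) : clampN 0 x = 0 := by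
  simp only [clampN, Nat.cast_zero, neg_zero]
  rcases le_or_gt x 0 with h | h
  · rw [min_eq_left h, max_eq_left h]
  · rw [min_eq_right h.le, max_eq_right le_rfl]

lemma clampN_eq_self {n : ℕ} {x : ℝ} (h : |x| ≤ n) : clampN n x = x := by
  rw [abs_le] at h
  simp only [clampN]
  rw [min_eq_left h.2, max_eq_right h.1]

lemma clampN_le (n : ℕ) (x : ℝ) : clampN n x ≤ n :=
  max_le (by simp [neg_le_self_iff]) (min_le_right _ _)

lemma le_clampN (n : ℕ) (x : ℝ) : -(n:ℝ) ≤ clampN n x := le_max_left _ _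

lemma clampN_abs_le (n : ℕ) (x : ℝ) : |clampN n x| ≤ n := by
  rw [abs_le]
  exact ⟨le_clampN n x, clampN_le n x⟩

lemma clampN_mono_x {n : ℕ} : Monotone (clampN n) := fun x y hxy =>
  max_le_max le_rfl (min_le_min hxy le_rfl)

lemma clampN_mul_mono_of_nonneg {x y : ℝ} (h : 0 ≤ x * y) :
    Monotone (fun n => clampN n x * y) := by
  intro m n hmn
  show clampN m x * y ≤ clampN n x * y
  rcases lt_trichotomy y 0 with hy | hy | hy
  · have hx : x ≤ 0 := by by_contra hx; push_neg at hx; nlinarith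
    have h1 : ∀ k : ℕ, clampN k x = max (-(k:ℝ)) x := by
      intro k
      simp only [clampN]
      rw [min_eq_left (le_trans hx (Nat.cast_nonneg k))]
    rw [h1 m, h1 n]
    apply mul_le_mul_of_nonpos_right _ hy.le
    exact max_le_max (neg_le_neg (by exact_mod_cast hmn)) le_rfl
  · simp [hy]
  · have hx : 0 ≤ x := by by_contra hx; push_neg at hx; nlinarith
    have h1 : ∀ k : ℕ, clampN k x = min x k := by
      intro k
      simp only [clampN]
      rw [max_eq_right (le_trans (neg_nonpos_of_nonneg (Nat.cast_nonneg k))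
        (le_min hx (Nat.cast_nonneg k)))]
    rw [h1 m, h1 n]
    exact mul_le_mul_of_nonneg_right (min_le_min le_rfl (by exact_mod_cast hmn)) hy.le

lemma clampN_mul_nonneg {x y : ℝ} (h : 0 ≤ x * y) (n : ℕ) : 0 ≤ clampN n x * y := by
  have := clampN_mul_mono_of_nonneg h (Nat.zero_le n)
  simpa [clampN_zero] using this

lemma clampN_mul_le_of_nonneg {x y : ℝ} (h : 0 ≤ x * y) (n : ℕ) : clampN n x * y ≤ x * y := by
  obtain ⟨N, hN⟩ := exists_nat_ge |x|
  calc clampN n x * y ≤ clampN (max n N) x * y :=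
        clampN_mul_mono_of_nonneg h (le_max_left _ _)
    _ = x * y := by rw [clampN_eq_self (le_trans hN (by exact_mod_cast le_max_right n N))]

lemma clampN_mul_anti_of_nonpos {x y : ℝ} (h : x * y ≤ 0) :
    Antitone (fun n => clampN n x * y) := by
  intro m n hmn
  show clampN n x * y ≤ clampN m x * y
  have h' : 0 ≤ x * (-y) := by linarith
  have := clampN_mul_mono_of_nonneg h' hmn
  simp only at this
  linarith

lemma clampN_mul_nonpos {x y : ℝ} (h : x * y ≤ 0) (n : ℕ) : clampN n x * y ≤ 0 := by
  have := clampN_mul_anti_of_nonpos h (Nat.zero_le n)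
  simpa [clampN_zero] using this

lemma clampN_mul_ge_of_nonpos {x y : ℝ} (h : x * y ≤ 0) (n : ℕ) : x * y ≤ clampN n x * y := by
  have h' : 0 ≤ x * (-y) := by linarith
  have := clampN_mul_le_of_nonneg h' n
  linarith

lemma iSup_ofReal_clampN_mul {x y : ℝ} (h : 0 ≤ x * y) :
    (⨆ n : ℕ, ENNReal.ofReal (clampN n x * y)) = ENNReal.ofReal (x * y) := by
  apply le_antisymm
  · exact iSup_le fun n => ENNReal.ofReal_le_ofReal (clampN_mul_le_of_nonneg h n)
  · obtain ⟨N, hN⟩ := exists_nat_ge |x|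
    calc ENNReal.ofReal (x * y) = ENNReal.ofReal (clampN N x * y) := by
          rw [clampN_eq_self hN]
      _ ≤ ⨆ n : ℕ, ENNReal.ofReal (clampN n x * y) :=
          le_iSup (fun n => ENNReal.ofReal (clampN n x * y)) N

lemma iSup_ofReal_neg_clampN_mul {x y : ℝ} (h : x * y ≤ 0) :
    (⨆ n : ℕ, ENNReal.ofReal (-(clampN n x * y))) = ENNReal.ofReal (-(x * y)) := by
  apply le_antisymm
  · exact iSup_le fun n =>
      ENNReal.ofReal_le_ofReal (by linarith [clampN_mul_ge_of_nonpos h n])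
  · obtain ⟨N, hN⟩ := exists_nat_ge |x|
    calc ENNReal.ofReal (-(x * y)) = ENNReal.ofReal (-(clampN N x * y)) := by
          rw [clampN_eq_self hN]
      _ ≤ ⨆ n : ℕ, ENNReal.ofReal (-(clampN n x * y)) :=
          le_iSup (fun n => ENNReal.ofReal (-(clampN n x * y))) N

lemma monotone_ofReal_clampN_mul {x y : ℝ} (h : 0 ≤ x * y) :
    Monotone (fun n : ℕ => ENNReal.ofReal (clampN n x * y)) := by
  intro m n hmn
  exact ENNReal.ofReal_le_ofReal (clampN_mul_mono_of_nonneg h hmn)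

lemma monotone_ofReal_neg_clampN_mul {x y : ℝ} (h : x * y ≤ 0) :
    Monotone (fun n : ℕ => ENNReal.ofReal (-(clampN n x * y))) := by
  intro m n hmn
  have h2 : clampN n x * y ≤ clampN m x * y := clampN_mul_anti_of_nonpos h hmn
  exact ENNReal.ofReal_le_ofReal (by linarith)

lemma measurable_clampN (n : ℕ) : Measurable (clampN n) :=
  measurable_const.max ((measurable_id.min measurable_const))

end Clamp
section Trunc

lemma ofReal_le_nnnorm (x : ℝ) : ENNReal.ofReal x ≤ (‖x‖₊ : ENNReal) := by
  rw [show (‖x‖₊ : ENNReal) = ‖x‖ₑ from rfl, Real.enorm_eq_ofReal_abs]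
  exact ENNReal.ofReal_le_ofReal (le_abs_self x)

lemma ofReal_neg_le_nnnorm (x : ℝ) : ENNReal.ofReal (-x) ≤ (‖x‖₊ : ENNReal) := by
  rw [show (‖x‖₊ : ENNReal) = ‖x‖ₑ from rfl, Real.enorm_eq_ofReal_abs]
  exact ENNReal.ofReal_le_ofReal (neg_le_abs x)

/-- Main positivity lemma. -/
lemma pos_main (c w G : ℝ → ℝ) (hcm : Measurable c) (hwm : Measurable w)
    (hanti : AntitoneOn c (Ioo (0:ℝ) 1))
    (hw : IntegrableOn w (Ioo (0:ℝ) 1) volume)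
    (hG : IntegrableOn G (Ioo (0:ℝ) 1) volume)
    (hbound : ∀ t, c t * w t ≤ G t)
    (hF : ∀ s, 0 ≤ s → s ≤ 1 → 0 ≤ ∫ t in Ioo (0:ℝ) s, w t)
    (hF1 : (∫ t in Ioo (0:ℝ) 1, w t) = 0) :
    IntegrableOn (fun t => c t * w t) (Ioo (0:ℝ) 1) volume ∧
      0 ≤ ∫ t in Ioo (0:ℝ) 1, c t * w t := by
  set lam := volume.restrict (Ioo (0:ℝ) 1) with hlam
  set cn : ℕ → ℝ → ℝ := fun n t => clampN n (c t) with hcn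
  have hcnm : ∀ n, Measurable (cn n) := fun n => (measurable_clampN n).comp hcm
  have hcnanti : ∀ n, AntitoneOn (cn n) (Ioo (0:ℝ) 1) := fun n s hs t ht hst =>
    clampN_mono_x (hanti hs ht hst)
  -- each truncated integral is nonneg
  have h0 : ∀ n : ℕ, 0 ≤ ∫ t in Ioo (0:ℝ) 1, cn n t * w t :=
    fun n => pos_core (cn n) w (hcnm n) hwm (hcnanti n) hw (-(n:ℝ)) n
      (fun t _ => le_clampN n (c t)) (fun t _ => clampN_le n (c t)) hF hF1
  have hint : ∀ n : ℕ, Integrable (fun t => cn n t * w t) lam := by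
    intro n
    apply Integrable.bdd_mul (c := (n:ℝ)) hw (hcnm n).aestronglyMeasurable
    apply Filter.Eventually.of_forall
    intro t
    rw [Real.norm_eq_abs]
    exact clampN_abs_le n (c t)
  have hcwm : Measurable (fun t => c t * w t) := hcm.mul hwm
  have hcnwm : ∀ n, Measurable (fun t => cn n t * w t) := fun n => (hcnm n).mul hwm
  set A : Set ℝ := {t | 0 ≤ c t * w t} with hA
  have hAm : MeasurableSet A := measurableSet_le measurable_const hcwm
  have hApos : ∀ t ∈ A, 0 ≤ c t * w t := fun t ht => ht
  have hAneg : ∀ t ∈ Aᶜ, c t * w t ≤ 0 := fun t ht => le_of_not_ge ht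
  set Pn : ℕ → ENNReal := fun n => ∫⁻ t in A, ENNReal.ofReal (cn n t * w t) ∂lam with hPn
  set Nn : ℕ → ENNReal := fun n => ∫⁻ t in Aᶜ, ENNReal.ofReal (-(cn n t * w t)) ∂lam with hNn
  set P : ENNReal := ∫⁻ t in A, ENNReal.ofReal (c t * w t) ∂lam with hP
  set N : ENNReal := ∫⁻ t in Aᶜ, ENNReal.ofReal (-(c t * w t)) ∂lam with hN
  -- MCT
  have hPsup : P = ⨆ n, Pn n := by
    rw [hP]
    have h1 : ∀ t ∈ A, ENNReal.ofReal (c t * w t)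
        = ⨆ n : ℕ, ENNReal.ofReal (cn n t * w t) := fun t ht =>
      (iSup_ofReal_clampN_mul (hApos t ht)).symm
    rw [setLIntegral_congr_fun hAm h1]
    rw [lintegral_iSup' (fun n => ((hcnwm n).ennreal_ofReal).aemeasurable)]
    filter_upwards [ae_restrict_mem hAm] with t ht
    exact monotone_ofReal_clampN_mul (hApos t ht)
  have hNsup : N = ⨆ n, Nn n := by
    rw [hN]
    have h1 : ∀ t ∈ Aᶜ, ENNReal.ofReal (-(c t * w t))
        = ⨆ n : ℕ, ENNReal.ofReal (-(cn n t * w t)) := fun t ht =>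
      (iSup_ofReal_neg_clampN_mul (hAneg t ht)).symm
    rw [setLIntegral_congr_fun hAm.compl h1]
    rw [lintegral_iSup' (fun n => ((show Measurable (fun t => -(cn n t * w t)) from (hcnwm n).neg).ennreal_ofReal).aemeasurable)]
    filter_upwards [ae_restrict_mem hAm.compl] with t ht
    exact monotone_ofReal_neg_clampN_mul (hAneg t ht)
  -- pointwise bound gives P finite
  have hPfin : P ≠ ⊤ := by
    have hle : P ≤ ∫⁻ t, (‖G t‖₊ : ENNReal) ∂lam := by
      refine le_trans (le_trans (lintegral_mono ?_) (setLIntegral_le_lintegral _ _)) le_rfl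
      intro t
      rcases le_or_gt (c t * w t) 0 with h | h
      · simp [ENNReal.ofReal_of_nonpos h]
      · exact le_trans (ENNReal.ofReal_le_ofReal (hbound t)) (ofReal_le_nnnorm _)
    exact ne_top_of_le_ne_top hG.2.ne hle
  -- finiteness of Pn, Nn
  have hPnfin : ∀ n, Pn n ≠ ⊤ := by
    intro n
    have hle : Pn n ≤ ∫⁻ t, (‖cn n t * w t‖₊ : ENNReal) ∂lam :=
      le_trans (lintegral_mono fun t => ofReal_le_nnnorm _) (setLIntegral_le_lintegral _ _)
    exact ne_top_of_le_ne_top (hint n).2.ne hle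
  have hNnfin : ∀ n, Nn n ≠ ⊤ := by
    intro n
    have hle : Nn n ≤ ∫⁻ t, (‖cn n t * w t‖₊ : ENNReal) ∂lam :=
      le_trans (lintegral_mono fun t => ofReal_neg_le_nnnorm _) (setLIntegral_le_lintegral _ _)
    exact ne_top_of_le_ne_top (hint n).2.ne hle
  -- real equalities for each n
  have hReal : ∀ n : ℕ, (∫ t, cn n t * w t ∂lam) = (Pn n).toReal - (Nn n).toReal := by
    intro n
    rw [← integral_add_compl hAm (hint n)]
    have e1 : (∫ t in A, cn n t * w t ∂lam) = (Pn n).toReal := by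
      have hnn : (0:ℝ → ℝ) ≤ᵐ[lam.restrict A] fun t => cn n t * w t := by
        filter_upwards [ae_restrict_mem hAm] with t ht
        exact clampN_mul_nonneg (hApos t ht) n
      rw [integral_eq_lintegral_of_nonneg_ae hnn ((hcnwm n).aestronglyMeasurable.restrict)]
    have e2 : (∫ t in Aᶜ, cn n t * w t ∂lam) = -(Nn n).toReal := by
      have : (∫ t in Aᶜ, cn n t * w t ∂lam) = -∫ t in Aᶜ, -(cn n t * w t) ∂lam := by
        rw [integral_neg]; ring
      rw [this]
      congr 1
      have hnn : (0:ℝ → ℝ) ≤ᵐ[lam.restrict Aᶜ] fun t => -(cn n t * w t) := by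
        filter_upwards [ae_restrict_mem hAm.compl] with t ht
        have := clampN_mul_nonpos (hAneg t ht) n
        simp only [Pi.zero_apply]
        linarith
      rw [integral_eq_lintegral_of_nonneg_ae hnn ((hcnwm n).neg.aestronglyMeasurable.restrict)]
    rw [e1, e2]
    ring
  -- Nn ≤ Pn
  have hNnPn : ∀ n, Nn n ≤ Pn n := by
    intro n
    have := h0 n
    rw [show (∫ t in Ioo (0:ℝ) 1, cn n t * w t) = ∫ t, cn n t * w t ∂lam from rfl, hReal n] at this
    have h2 : (Nn n).toReal ≤ (Pn n).toReal := by linarith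
    exact (ENNReal.toReal_le_toReal (hNnfin n) (hPnfin n)).mp h2
  have hNP : N ≤ P := by
    rw [hNsup, hPsup]
    exact iSup_mono hNnPn
  have hNfin : N ≠ ⊤ := ne_top_of_le_ne_top hPfin hNP
  -- integrability of c * w
  have hcwint : Integrable (fun t => c t * w t) lam := by
    refine ⟨hcwm.aestronglyMeasurable, ?_⟩
    rw [HasFiniteIntegral, ← lintegral_add_compl (fun t => ‖c t * w t‖ₑ) hAm]
    have e1 : (∫⁻ t in A, ‖c t * w t‖ₑ ∂lam) = P := by
      apply setLIntegral_congr_fun hAm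
      intro t ht
      beta_reduce
      rw [Real.enorm_eq_ofReal_abs, abs_of_nonneg (hApos t ht)]
    have e2 : (∫⁻ t in Aᶜ, ‖c t * w t‖ₑ ∂lam) = N := by
      apply setLIntegral_congr_fun hAm.compl
      intro t ht
      beta_reduce
      rw [Real.enorm_eq_ofReal_abs, abs_of_nonpos (hAneg t ht)]
    rw [e1, e2]
    exact ENNReal.add_lt_top.mpr ⟨lt_top_iff_ne_top.mpr hPfin, lt_top_iff_ne_top.mpr hNfin⟩
  refine ⟨hcwint, ?_⟩
  -- final value
  have hRealc : (∫ t, c t * w t ∂lam) = P.toReal - N.toReal := by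
    rw [← integral_add_compl hAm hcwint]
    have e1 : (∫ t in A, c t * w t ∂lam) = P.toReal := by
      have hnn : (0:ℝ → ℝ) ≤ᵐ[lam.restrict A] fun t => c t * w t := by
        filter_upwards [ae_restrict_mem hAm] with t ht
        exact hApos t ht
      rw [integral_eq_lintegral_of_nonneg_ae hnn (hcwm.aestronglyMeasurable.restrict)]
    have e2 : (∫ t in Aᶜ, c t * w t ∂lam) = -N.toReal := by
      have : (∫ t in Aᶜ, c t * w t ∂lam) = -∫ t in Aᶜ, -(c t * w t) ∂lam := by
        rw [integral_neg]; ring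
      rw [this]
      congr 1
      have hnn : (0:ℝ → ℝ) ≤ᵐ[lam.restrict Aᶜ] fun t => -(c t * w t) := by
        filter_upwards [ae_restrict_mem hAm.compl] with t ht
        simp only [Pi.zero_apply]
        linarith [hAneg t ht]
      rw [integral_eq_lintegral_of_nonneg_ae hnn (hcwm.neg.aestronglyMeasurable.restrict)]
    rw [e1, e2]
    ring
  show (0:ℝ) ≤ ∫ t, c t * w t ∂lam
  rw [hRealc]
  have := ENNReal.toReal_mono hPfin hNP
  linarith

end Trunc
section OneDim

lemma karamata_oneDim (φ : ℝ → ℝ) (hφ : ConvexOn ℝ Set.univ φ)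
    (u v : ℝ → ℝ) (hum : Measurable u) (hvm : Measurable v)
    (huanti : AntitoneOn u (Ioo (0:ℝ) 1))
    (hui : IntegrableOn u (Ioo (0:ℝ) 1) volume)
    (hvi : IntegrableOn v (Ioo (0:ℝ) 1) volume)
    (hφu : IntegrableOn (fun t => φ (u t)) (Ioo (0:ℝ) 1) volume)
    (hφv : IntegrableOn (fun t => φ (v t)) (Ioo (0:ℝ) 1) volume)
    (hmaj : ∀ s, 0 ≤ s → s < 1 → (∫ t in Ioo (0:ℝ) s, u t) ≤ ∫ t in Ioo (0:ℝ) s, v t)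
    (heq1 : (∫ t in Ioo (0:ℝ) 1, u t) = ∫ t in Ioo (0:ℝ) 1, v t) :
    (∫ t in Ioo (0:ℝ) 1, φ (u t)) ≤ ∫ t in Ioo (0:ℝ) 1, φ (v t) := by
  have hmaj' : ∀ s, 0 ≤ s → s ≤ 1 → (∫ t in Ioo (0:ℝ) s, u t) ≤ ∫ t in Ioo (0:ℝ) s, v t := by
    intro s h0 h1
    rcases lt_or_eq_of_le h1 with h | h
    · exact hmaj s h0 h
    · rw [h]; exact le_of_eq heq1
  set c : ℝ → ℝ := fun t => subgrad φ (u t) with hc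
  have hcm : Measurable c := (subgrad_monotone hφ).measurable.comp hum
  have hcanti : AntitoneOn c (Ioo (0:ℝ) 1) := fun s hs t ht hst =>
    subgrad_monotone hφ (huanti hs ht hst)
  set w : ℝ → ℝ := fun t => v t - u t with hwdef
  have hwm : Measurable w := hvm.sub hum
  have hw : IntegrableOn w (Ioo (0:ℝ) 1) volume := hvi.sub hui
  set G : ℝ → ℝ := fun t => φ (v t) - φ (u t) with hGdef
  have hG : IntegrableOn G (Ioo (0:ℝ) 1) volume := hφv.sub hφu
  have hbound : ∀ t, c t * w t ≤ G t := by
    intro t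
    have := subgrad_inequality hφ (u t) (v t)
    simp only [hc, hwdef, hGdef]
    linarith
  have hF : ∀ s, 0 ≤ s → s ≤ 1 → 0 ≤ ∫ t in Ioo (0:ℝ) s, w t := by
    intro s h0 h1
    have hsub : Ioo (0:ℝ) s ⊆ Ioo 0 1 := Ioo_subset_Ioo le_rfl h1
    rw [show w = fun t => v t - u t from rfl]
    rw [integral_sub (hvi.mono_set hsub) (hui.mono_set hsub)]
    linarith [hmaj' s h0 h1]
  have hF1 : (∫ t in Ioo (0:ℝ) 1, w t) = 0 := by
    rw [show w = fun t => v t - u t from rfl, integral_sub hvi hui]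
    linarith [heq1]
  obtain ⟨hint, hpos⟩ := pos_main c w G hcm hwm hcanti hw hG hbound hF hF1
  have hmono : (∫ t in Ioo (0:ℝ) 1, c t * w t) ≤ ∫ t in Ioo (0:ℝ) 1, G t :=
    integral_mono hint hG hbound
  have hGeq : (∫ t in Ioo (0:ℝ) 1, G t)
      = (∫ t in Ioo (0:ℝ) 1, φ (v t)) - ∫ t in Ioo (0:ℝ) 1, φ (u t) := by
    rw [show G = fun t => φ (v t) - φ (u t) from rfl, integral_sub hφv hφu]
  linarith

end OneDim

section Transfer

variable {Z : Type*} [MeasurableSpace Z] {μ : Measure Z} [IsProbabilityMeasure μ] {f : Z → ℝ}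

lemma decRearr'_congr {f' : Z → ℝ} (h : f =ᵐ[μ] f') : decRearr' μ f = decRearr' μ f' := by
  funext t
  have hmeas : ∀ a : ℝ, μ {x | a < f x} = μ {x | a < f' x} := by
    intro a
    apply measure_congr
    filter_upwards [h] with x hx
    show (a < f x) = (a < f' x)
    rw [hx]
  simp only [decRearr']
  congr 1
  ext a
  rw [mem_setOf_eq, mem_setOf_eq, hmeas a]

lemma interval_to_Ioo (hf : Measurable f) {s : ℝ} (h0 : 0 ≤ s) (h1 : s ≤ 1) :
    (∫ t in (0:ℝ)..s, decRearr' μ f t) = ∫ t in Ioo (0:ℝ) s, decT μ f t := by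
  rw [intervalIntegral.integral_of_le h0, integral_Ioc_eq_integral_Ioo]
  apply setIntegral_congr_fun measurableSet_Ioo
  intro t ht
  exact (decT_eqOn ⟨ht.1, lt_of_lt_of_le ht.2 h1⟩).symm

lemma integral_comp_decT (hf : Measurable f) {ψ : ℝ → ℝ} (hψ : Continuous ψ) :
    (∫ x, ψ (f x) ∂μ) = ∫ t in Ioo (0:ℝ) 1, ψ (decT μ f t) := by
  have h1 : (∫ x, ψ (f x) ∂μ) = ∫ y, ψ y ∂(Measure.map f μ) :=
    (integral_map hf.aemeasurable hψ.aestronglyMeasurable).symm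
  have h2 : (∫ y, ψ y ∂(Measure.map (decT μ f) (volume.restrict (Ioo (0:ℝ) 1))))
      = ∫ t in Ioo (0:ℝ) 1, ψ (decT μ f t) :=
    integral_map (measurable_decT hf).aemeasurable hψ.aestronglyMeasurable
  rw [h1, ← map_decT_eq hf, h2]

lemma integrable_comp_decT (hf : Measurable f) {ψ : ℝ → ℝ} (hψ : Continuous ψ)
    (h : Integrable (fun x => ψ (f x)) μ) :
    IntegrableOn (fun t => ψ (decT μ f t)) (Ioo (0:ℝ) 1) volume := by
  have h1 : Integrable ψ (Measure.map f μ) :=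
    (integrable_map_measure hψ.aestronglyMeasurable hf.aemeasurable).mpr h
  rw [← map_decT_eq hf] at h1
  exact (integrable_map_measure hψ.aestronglyMeasurable
    (measurable_decT hf).aemeasurable).mp h1

end Transfer
/-- Karamata / Hardy–Littlewood–Pólya: if g majorizes f then
∫ φ(f) ≤ ∫ φ(g) for every convex φ, provided the integrals exist. -/
theorem karamata_majorization {X Y : Type*} [MeasurableSpace X] [MeasurableSpace Y]
    (μ : Measure X) [IsProbabilityMeasure μ] (ν : Measure Y) [IsProbabilityMeasure ν]
    (f : X → ℝ) (g : Y → ℝ) (hf : Integrable f μ) (hg : Integrable g ν)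
    (hmaj : ∀ s : ℝ, 0 ≤ s → s < 1 →
      (∫ t in (0:ℝ)..s, decRearr μ f t) ≤ ∫ t in (0:ℝ)..s, decRearr ν g t)
    (heq : (∫ t in (0:ℝ)..1, decRearr μ f t) = ∫ t in (0:ℝ)..1, decRearr ν g t)
    (φ : ℝ → ℝ) (hφ : ConvexOn ℝ Set.univ φ)
    (hφf : Integrable (fun x => φ (f x)) μ) (hφg : Integrable (fun y => φ (g y)) ν) :
    (∫ x, φ (f x) ∂μ) ≤ ∫ y, φ (g y) ∂ν := by
  have hfm := hf.1.aemeasurable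
  have hgm := hg.1.aemeasurable
  set f' : X → ℝ := hfm.mk f with hf'def
  set g' : Y → ℝ := hgm.mk g with hg'def
  have hf'm : Measurable f' := hfm.measurable_mk
  have hg'm : Measurable g' := hgm.measurable_mk
  have hff' : f =ᵐ[μ] f' := hfm.ae_eq_mk
  have hgg' : g =ᵐ[ν] g' := hgm.ae_eq_mk
  have hdf : decRearr μ f = decRearr' μ f' := by
    have h1 : decRearr μ f = decRearr' μ f := rfl
    rw [h1, decRearr'_congr hff']
  have hdg : decRearr ν g = decRearr' ν g' := by
    have h1 : decRearr ν g = decRearr' ν g := rfl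
    rw [h1, decRearr'_congr hgg']
  have hφc : Continuous φ := continuousOn_univ.mp (hφ.continuousOn isOpen_univ)
  have hφf' : Integrable (fun x => φ (f' x)) μ :=
    hφf.congr (hff'.mono fun x hx => by simp only [hx])
  have hφg' : Integrable (fun y => φ (g' y)) ν :=
    hφg.congr (hgg'.mono fun y hy => by simp only [hy])
  have hf'i : Integrable f' μ := hf.congr hff'
  have hg'i : Integrable g' ν := hg.congr hgg'
  set u : ℝ → ℝ := decT μ f' with hu
  set v : ℝ → ℝ := decT ν g' with hv
  have hum : Measurable u := measurable_decT hf'm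
  have hvm : Measurable v := measurable_decT hg'm
  have huanti : AntitoneOn u (Ioo (0:ℝ) 1) := decT_antitoneOn hf'm
  have hui : IntegrableOn u (Ioo (0:ℝ) 1) volume :=
    integrable_comp_decT hf'm (ψ := fun y => y) continuous_id hf'i
  have hvi : IntegrableOn v (Ioo (0:ℝ) 1) volume :=
    integrable_comp_decT hg'm (ψ := fun y => y) continuous_id hg'i
  have hφu : IntegrableOn (fun t => φ (u t)) (Ioo (0:ℝ) 1) volume :=
    integrable_comp_decT hf'm hφc hφf'
  have hφv : IntegrableOn (fun t => φ (v t)) (Ioo (0:ℝ) 1) volume :=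
    integrable_comp_decT hg'm hφc hφg'
  have hmaj2 : ∀ s, 0 ≤ s → s < 1 → (∫ t in Ioo (0:ℝ) s, u t) ≤ ∫ t in Ioo (0:ℝ) s, v t := by
    intro s h0 h1
    rw [hu, hv, ← interval_to_Ioo hf'm h0 h1.le, ← interval_to_Ioo hg'm h0 h1.le, ← hdf, ← hdg]
    exact hmaj s h0 h1
  have heq2 : (∫ t in Ioo (0:ℝ) 1, u t) = ∫ t in Ioo (0:ℝ) 1, v t := by
    rw [hu, hv, ← interval_to_Ioo hf'm zero_le_one le_rfl,
      ← interval_to_Ioo hg'm zero_le_one le_rfl, ← hdf, ← hdg]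
    exact heq
  have hmain := karamata_oneDim φ hφ u v hum hvm huanti hui hvi hφu hφv hmaj2 heq2
  calc (∫ x, φ (f x) ∂μ) = ∫ x, φ (f' x) ∂μ :=
        integral_congr_ae (hff'.mono fun x hx => by simp only [hx])
    _ = ∫ t in Ioo (0:ℝ) 1, φ (u t) := integral_comp_decT hf'm hφc
    _ ≤ ∫ t in Ioo (0:ℝ) 1, φ (v t) := hmain
    _ = ∫ y, φ (g' y) ∂ν := (integral_comp_decT hg'm hφc).symm
    _ = ∫ y, φ (g y) ∂ν := (integral_congr_ae (hgg'.mono fun y hy => by simp only [hy])).symm
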